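/- arXiv:1707.09777 — 6 statements merged into one kernel-verified Lean document; each statement's English description precedes it below -/
import Mathlib

section
/- Let f : [0,∞) → [0,∞) be continuously differentiable, let h : [0,∞) → [0,∞) be continuous with h(t) ≥ C for some constant C > 0 and all t ≥ 0, and let g : [0,∞) → ℝ be continuous with g(t) → 0 as t → ∞. If f'(t) ≤ −h(t) f(t) + h(t) g(t) for all t ≥ 0, then f(t) → 0 as t → ∞. -/
/-!
Once `g ≤ δ` on `[T, ∞)`, the inequality gives `f' ≤ h (δ - f) ≤ -C (f - δ)` wherever `f ≥ δ`,
since `h ≥ C`. Hence `f` stays below the barrier `δ + η + K e^{-C (t - T)}` for any `η > 0`, so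
`limsup f ≤ δ`; as `δ > 0` is arbitrary and `f ≥ 0`, `f → 0`.
-/

open Set Filter Topology MeasureTheory

section Barrier

variable {f f' : ℝ → ℝ} {T C δ : ℝ}

theorem le_add_mul_exp_of_deriv_le_neg_mul_sub {η K : ℝ} (hC : 0 < C) (hη : 0 < η)
    (hf : ∀ x ∈ Ici T, HasDerivWithinAt f (f' x) (Ici T) x)
    (hdecay : ∀ x ∈ Ici T, δ ≤ f x → f' x ≤ -C * (f x - δ)) (hK₀ : 0 ≤ K) (hK : f T ≤ δ + K) :
    ∀ t ∈ Ici T, f t ≤ δ + η + K * Real.exp (-C * (t - T)) := by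
  have hB : ∀ x, HasDerivAt (fun t => δ + η + K * Real.exp (-C * (t - T)))
      (-C * (K * Real.exp (-C * (x - T)))) x := fun x =>
    ((((hasDerivAt_id x).sub_const T).const_mul (-C)).exp.const_mul K).const_add (δ + η)
      |>.congr_deriv (by simp only [id]; ring)
  intro t ht
  refine image_le_of_deriv_right_lt_deriv_boundary (a := T) (b := t)
    (fun x hx => (hf x hx.1).continuousWithinAt.mono Icc_subset_Ici_self)
    (fun x hx => (hf x hx.1).mono (Ici_subset_Ici.2 hx.1)) ?_ hB ?_ ⟨ht, le_rfl⟩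
  · simp only [sub_self, mul_zero, Real.exp_zero, mul_one]
    linarith
  · intro x hx hfx
    have hexp : 0 ≤ K * Real.exp (-C * (x - T)) := mul_nonneg hK₀ (Real.exp_pos _).le
    have := hdecay x hx.1 (by rw [hfx]; linarith)
    rw [hfx] at this
    nlinarith

theorem eventually_lt_of_deriv_le_neg_mul_sub (hC : 0 < C)
    (hf : ∀ x ∈ Ici T, HasDerivWithinAt f (f' x) (Ici T) x)
    (hdecay : ∀ x ∈ Ici T, δ ≤ f x → f' x ≤ -C * (f x - δ)) {δ' : ℝ} (hδ' : δ < δ') :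
    ∀ᶠ t in atTop, f t < δ' := by
  set η := (δ' - δ) / 2 with hη
  set K := max (f T - δ) 0
  have hbarrier := le_add_mul_exp_of_deriv_le_neg_mul_sub (η := η) (K := K) hC (by positivity) hf
    hdecay (le_max_right _ _) (by linarith [le_max_left (f T - δ) 0])
  have htail : Tendsto (fun t => K * Real.exp (-C * (t - T))) atTop (𝓝 0) := by
    have hlin : Tendsto (fun t => -C * (t - T)) atTop atBot :=
      (tendsto_atTop_add_const_right _ (-T) tendsto_id).const_mul_atTop_of_neg (neg_neg_of_pos hC)
    simpa using (Real.tendsto_exp_comp_nhds_zero.2 hlin).const_mul K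
  filter_upwards [eventually_ge_atTop T, htail.eventually (gt_mem_nhds (by positivity : 0 < η))]
    with t ht htail
  linarith [hbarrier t ht, hη]

end Barrier

theorem gronwall_variant_general
    (f f' h g : ℝ → ℝ) (C : ℝ)
    (hf_nonneg : ∀ t ∈ Ici (0:ℝ), 0 ≤ f t)
    (hf_deriv : ∀ t ∈ Ici (0:ℝ), HasDerivWithinAt f (f' t) (Ici 0) t)
    (hC : 0 < C)
    (hh_lb : ∀ t ∈ Ici (0:ℝ), C ≤ h t)
    (hg_lim : Tendsto g atTop (nhds 0))
    (hineq : ∀ t ∈ Ici (0:ℝ), f' t ≤ -h t * f t + h t * g t) :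
    Tendsto f atTop (nhds 0) := by
  refine tendsto_order.2 ⟨fun a ha => ?_, fun a ha => ?_⟩
  · filter_upwards [eventually_ge_atTop 0] with t ht using ha.trans_le (hf_nonneg t ht)
  obtain ⟨T₀, hg_small⟩ := eventually_atTop.1 (hg_lim.eventually (gt_mem_nhds (half_pos ha)))
  set T := max T₀ 0
  have hT : ∀ {x}, x ∈ Ici T → x ∈ Ici (0:ℝ) := fun hx => mem_Ici.2 ((le_max_right _ _).trans hx)
  have hdecay : ∀ x ∈ Ici T, a / 2 ≤ f x → f' x ≤ -C * (f x - a / 2) := fun x hx hfx => by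
    have hgx := hg_small x (le_trans (le_max_left _ _) hx)
    have hhx := hh_lb x (hT hx)
    -- `h ≥ C > 0` turns `f' ≤ h (g - f)` into `f' ≤ C (a/2 - f)` once `f ≥ a/2 > g`
    nlinarith [hineq x (hT hx)]
  exact eventually_lt_of_deriv_le_neg_mul_sub hC
    (fun x hx => (hf_deriv x (hT hx)).mono (Ici_subset_Ici.2 (le_max_right _ _))) hdecay
    (half_lt_self ha)

/-- Lemma 2.6, variant of Gronwall's lemma:
If `f : [0,∞) → [0,∞)` is C¹, `h : [0,∞) → [0,∞)` is continuous with `h ≥ C > 0`,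
`g : [0,∞) → ℝ` is continuous with `g(t) → 0` as `t → ∞`, and
`f'(t) ≤ −h(t) f(t) + h(t) g(t)` for all `t ≥ 0`, then `f(t) → 0` as `t → ∞`. -/
theorem gronwall_variant
    (f f' h g : ℝ → ℝ) (C : ℝ)
    (hf_nonneg : ∀ t ∈ Ici (0:ℝ), 0 ≤ f t)
    (hf_deriv : ∀ t ∈ Ici (0:ℝ), HasDerivWithinAt f (f' t) (Ici 0) t)
    (hf'_cont : ContinuousOn f' (Ici 0))
    (hh_cont : ContinuousOn h (Ici 0))
    (hh_nonneg : ∀ t ∈ Ici (0:ℝ), 0 ≤ h t)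
    (hC : 0 < C)
    (hh_lb : ∀ t ∈ Ici (0:ℝ), C ≤ h t)
    (hg_cont : ContinuousOn g (Ici 0))
    (hg_lim : Tendsto g atTop (nhds 0))
    (hineq : ∀ t ∈ Ici (0:ℝ), f' t ≤ -h t * f t + h t * g t) :
    Tendsto f atTop (nhds 0) :=
  gronwall_variant_general f f' h g C hf_nonneg hf_deriv hC hh_lb hg_lim hineq
end

section
/- Assume (D+) and let (V,u) satisfy the monomer-equation setting with total mass M. If V(0) < d(0) and M > d(0), then there exists t* ∈ (0,∞) such that V(t*) = d(0) and V'(t*) > 0. -/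
/-! Since `d x ≥ d 0 + α x`, mass conservation turns the monomer equation into
`V' ≥ (d 0 - V) ∫ u + α (M - V)`, which is at least `α (M - d 0) > 0` whenever `V ≤ d 0`.
Hence `V` grows at least linearly while it stays below `d 0`, so it reaches `d 0`
(intermediate value theorem), and at that time `V' > 0`. -/

open Set Filter Topology MeasureTheory

/-- Assumption (D+): `d : [0,∞) → [0,∞)` is C¹ with `0 < α ≤ d'(x) ≤ β` for all `x ≥ 0`. -/
structure DPlus (d d' : ℝ → ℝ) (α β : ℝ) : Prop where
  nonneg : ∀ x ∈ Set.Ici (0:ℝ), 0 ≤ d x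
  hasDeriv : ∀ x ∈ Set.Ici (0:ℝ), HasDerivWithinAt d (d' x) (Set.Ici 0) x
  contDeriv : ContinuousOn d' (Set.Ici 0)
  alpha_pos : 0 < α
  deriv_lb : ∀ x ∈ Set.Ici (0:ℝ), α ≤ d' x
  deriv_ub : ∀ x ∈ Set.Ici (0:ℝ), d' x ≤ β

/-- The monomer-equation setting with total mass `M`: `V` is C¹ (derivative `V'`) and
bounded, `u(t,·) ≥ 0` with `(1+x)u(t,x)` integrable, the moments
`t ↦ ∫₀^∞ u(t,x) dx` and `t ↦ ∫₀^∞ d(x)u(t,x) dx` are continuous,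
`V' = −V ∫u + ∫ d u`, and `V(t) + ∫₀^∞ x u(t,x) dx = M`. -/
structure MonomerSetting (d : ℝ → ℝ) (M : ℝ) (V V' : ℝ → ℝ) (u : ℝ → ℝ → ℝ) : Prop where
  V_hasDeriv : ∀ t ∈ Set.Ici (0:ℝ), HasDerivWithinAt V (V' t) (Set.Ici 0) t
  V'_cont : ContinuousOn V' (Set.Ici 0)
  V_bdd : ∃ K : ℝ, ∀ t ∈ Set.Ici (0:ℝ), |V t| ≤ K
  u_nonneg : ∀ t ∈ Set.Ici (0:ℝ), ∀ x ∈ Set.Ici (0:ℝ), 0 ≤ u t x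
  u_int : ∀ t ∈ Set.Ici (0:ℝ), IntegrableOn (fun x => (1 + x) * u t x) (Set.Ioi 0)
  du_int : ∀ t ∈ Set.Ici (0:ℝ), IntegrableOn (fun x => d x * u t x) (Set.Ioi 0)
  rho_cont : ContinuousOn (fun t => ∫ x in Set.Ioi (0:ℝ), u t x) (Set.Ici 0)
  du_cont : ContinuousOn (fun t => ∫ x in Set.Ioi (0:ℝ), d x * u t x) (Set.Ici 0)
  V_ode : ∀ t ∈ Set.Ici (0:ℝ),
    V' t = -V t * (∫ x in Set.Ioi (0:ℝ), u t x) + ∫ x in Set.Ioi (0:ℝ), d x * u t x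
  mass : ∀ t ∈ Set.Ici (0:ℝ), V t + ∫ x in Set.Ioi (0:ℝ), x * u t x = M

theorem add_mul_sub_le_of_hasDerivWithinAt_Ici {f f' : ℝ → ℝ} {a C x : ℝ}
    (hf : ∀ t ∈ Ici a, HasDerivWithinAt f (f' t) (Ici a) t) (hC : ∀ t ∈ Ici a, C ≤ f' t)
    (hx : a ≤ x) : f a + C * (x - a) ≤ f x := by
  have hf_int : ∀ t ∈ interior (Ici a), HasDerivAt f (f' t) t := by
    rw [interior_Ici]
    exact fun t ht => (hf t (mem_Ici.2 ht.le)).hasDerivAt (Ici_mem_nhds ht)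
  have := (convex_Ici a).mul_sub_le_image_sub_of_le_deriv
    (fun t ht => (hf t ht).continuousWithinAt)
    (fun t ht => (hf_int t ht).differentiableAt.differentiableWithinAt)
    (fun t ht => (hf_int t ht).deriv ▸ hC t (interior_subset ht)) a self_mem_Ici x hx hx
  linarith

theorem integrableOn_Ioi_of_one_add_mul {f : ℝ → ℝ}
    (hf : IntegrableOn (fun x => (1 + x) * f x) (Ioi 0)) : IntegrableOn f (Ioi 0) := by
  have hbdd : ∀ᵐ x ∂(volume.restrict (Ioi (0:ℝ))), ‖(1 + x)⁻¹‖ ≤ 1 := by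
    refine ae_restrict_of_forall_mem measurableSet_Ioi fun x (hx : 0 < x) => ?_
    rw [Real.norm_eq_abs, abs_of_pos (by positivity)]
    exact inv_le_one_of_one_le₀ (by linarith)
  refine IntegrableOn.congr_fun (f := fun x => (1 + x)⁻¹ * ((1 + x) * f x))
    (hf.bdd_mul (measurable_const.add measurable_id).inv.aestronglyMeasurable hbdd)
    (fun x (hx : 0 < x) => ?_) measurableSet_Ioi
  field_simp

theorem integrableOn_Ioi_mul_of_one_add_mul {f : ℝ → ℝ}
    (hf : IntegrableOn (fun x => (1 + x) * f x) (Ioi 0)) :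
    IntegrableOn (fun x => x * f x) (Ioi 0) :=
  (hf.sub (integrableOn_Ioi_of_one_add_mul hf)).congr_fun
    (fun x _ => by simp only [Pi.sub_apply]; ring) measurableSet_Ioi

theorem add_mul_integral_le_integral_mul {d f : ℝ → ℝ} {a α : ℝ}
    (hf_nonneg : ∀ x ∈ Ioi 0, 0 ≤ f x) (hf : IntegrableOn (fun x => (1 + x) * f x) (Ioi 0))
    (hdf : IntegrableOn (fun x => d x * f x) (Ioi 0)) (hd : ∀ x ∈ Ioi 0, a + α * x ≤ d x) :
    a * (∫ x in Ioi 0, f x) + α * ∫ x in Ioi 0, x * f x ≤ ∫ x in Ioi 0, d x * f x := by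
  have hf₀ := (integrableOn_Ioi_of_one_add_mul hf).const_mul a
  have hf₁ := (integrableOn_Ioi_mul_of_one_add_mul hf).const_mul α
  have hmono := setIntegral_mono_on (f := fun x => a * f x + α * (x * f x)) (hf₀.add hf₁) hdf
      measurableSet_Ioi fun x hx => by
    have := mul_le_mul_of_nonneg_right (hd x hx) (hf_nonneg x hx)
    linarith
  rwa [integral_add hf₀ hf₁, integral_const_mul, integral_const_mul] at hmono

theorem exists_pos_eq_and_deriv_pos_of_le_deriv {V V' : ℝ → ℝ} {a c : ℝ}
    (hV : ∀ t ∈ Ici 0, HasDerivWithinAt V (V' t) (Ici 0) t) (hc : 0 < c)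
    (hV' : ∀ t ∈ Ici 0, V t ≤ a → c ≤ V' t) (h0 : V 0 < a) :
    ∃ t, 0 < t ∧ V t = a ∧ 0 < V' t := by
  obtain ⟨T, hT, hVT⟩ : ∃ T, 0 ≤ T ∧ a ≤ V T := by
    by_contra! hlt
    have hTpos : 0 ≤ (a - V 0) / c := div_nonneg (by linarith) hc.le
    have := add_mul_sub_le_of_hasDerivWithinAt_Ici hV
      (fun t ht => hV' t ht (hlt t ht).le) hTpos
    rw [sub_zero, mul_div_cancel₀ _ hc.ne'] at this
    linarith [hlt _ hTpos]
  obtain ⟨t, ht, hVt⟩ := intermediate_value_Icc hT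
    (fun s hs => ((hV s hs.1).continuousWithinAt).mono fun r hr => hr.1) ⟨h0.le, hVT⟩
  have ht0 : 0 < t := ht.1.lt_of_ne (by rintro rfl; linarith)
  exact ⟨t, ht0, hVt, hc.trans_le (hV' t ht.1 hVt.le)⟩

theorem MonomerSetting.sub_mul_add_mul_le_deriv {d : ℝ → ℝ} {M a α : ℝ} {V V' : ℝ → ℝ}
    {u : ℝ → ℝ → ℝ} (hset : MonomerSetting d M V V' u) (hd : ∀ x ∈ Ioi 0, a + α * x ≤ d x)
    {t : ℝ} (ht : t ∈ Ici 0) :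
    (a - V t) * (∫ x in Ioi 0, u t x) + α * (M - V t) ≤ V' t := by
  have hmoment := add_mul_integral_le_integral_mul
    (fun x hx => hset.u_nonneg t ht x (mem_Ici.2 (le_of_lt hx))) (hset.u_int t ht)
    (hset.du_int t ht) hd
  rw [hset.V_ode t ht, ← hset.mass t ht, add_sub_cancel_left, sub_mul]
  linarith

theorem monomer_crosses_threshold_general
    (d d' : ℝ → ℝ) (α β : ℝ) (hD : DPlus d d' α β)
    (M : ℝ)
    (V V' : ℝ → ℝ) (u : ℝ → ℝ → ℝ)
    (hset : MonomerSetting d M V V' u)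
    (hV0 : V 0 < d 0) (hMd : d 0 < M) :
    ∃ tstar : ℝ, 0 < tstar ∧ V tstar = d 0 ∧ 0 < V' tstar := by
  have hd : ∀ x ∈ Ioi 0, d 0 + α * x ≤ d x := fun x hx => by
    simpa using add_mul_sub_le_of_hasDerivWithinAt_Ici hD.hasDeriv hD.deriv_lb (le_of_lt hx)
  refine exists_pos_eq_and_deriv_pos_of_le_deriv hset.V_hasDeriv
    (mul_pos hD.alpha_pos (sub_pos.2 hMd)) (fun t ht hVt => ?_) hV0
  have hρ : 0 ≤ ∫ x in Ioi 0, u t x := setIntegral_nonneg measurableSet_Ioi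
    fun x hx => hset.u_nonneg t ht x (mem_Ici.2 (le_of_lt hx))
  have hgrowth := hset.sub_mul_add_mul_le_deriv hd ht
  have hmass_gap : α * (M - d 0) ≤ α * (M - V t) :=
    mul_le_mul_of_nonneg_left (by linarith) hD.alpha_pos.le
  linarith [mul_nonneg (sub_nonneg.2 hVt) hρ]

/-- Proposition 1.1, case 1: under (D+), in the monomer-equation setting
with total mass `M`, if `V(0) < d(0)` and `M > d(0)` then there is `t* ∈ (0,∞)` with
`V(t*) = d(0)` and `V'(t*) > 0`. -/
theorem monomer_crosses_threshold
    (d d' : ℝ → ℝ) (α β : ℝ) (hD : DPlus d d' α β)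
    (M : ℝ) (hM : 0 < M)
    (V V' : ℝ → ℝ) (u : ℝ → ℝ → ℝ)
    (hset : MonomerSetting d M V V' u)
    (hV0 : V 0 < d 0) (hMd : d 0 < M) :
    ∃ tstar : ℝ, 0 < tstar ∧ V tstar = d 0 ∧ 0 < V' tstar :=
  monomer_crosses_threshold_general d d' α β hD M V V' u hset hV0 hMd
end

section
/- Assume (D+) and let (V,u) satisfy the monomer-equation setting with total mass M. If V(0) < d(0) and M ≤ d(0), then |M − V(t)| ≤ (M − V(0)) e^{−αt} for all t ≥ 0. -/
open Set Filter Topology MeasureTheory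

theorem add_mul_le_of_le_hasDerivWithinAt {f f' : ℝ → ℝ} {α : ℝ}
    (hf : ∀ x ∈ Ici (0:ℝ), HasDerivWithinAt f (f' x) (Ici 0) x)
    (hα : ∀ x ∈ Ici (0:ℝ), α ≤ f' x) :
    ∀ x ∈ Ici (0:ℝ), f 0 + α * x ≤ f x := by
  intro x hx
  have hline : ∀ y, HasDerivWithinAt (fun y => f 0 + α * y) α (Ici y) y := fun y => by
    simpa using (((hasDerivAt_id y).const_mul α).const_add (f 0)).hasDerivWithinAt
  exact image_le_of_deriv_right_le_deriv_boundary (by fun_prop) (fun y _ => hline y)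
    (by simp) (fun y hy => (hf y hy.1).continuousWithinAt.mono Icc_subset_Ici_self)
    (fun y hy => (hf y hy.1).mono (Ici_subset_Ici.2 hy.1)) (fun y hy => hα y hy.1) ⟨hx, le_rfl⟩

theorem le_mul_exp_of_hasDerivWithinAt_le_mul {f f' : ℝ → ℝ} {K a : ℝ}
    (hf : ∀ t ∈ Ici a, HasDerivWithinAt f (f' t) (Ici a) t)
    (bound : ∀ t ∈ Ici a, f' t ≤ K * f t) :
    ∀ t ∈ Ici a, f t ≤ f a * Real.exp (K * (t - a)) := by
  intro t ht
  have h := le_gronwallBound_of_liminf_deriv_right_le (f := f) (f' := f') (ε := 0) (b := t)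
    (fun s hs => (hf s hs.1).continuousWithinAt.mono Icc_subset_Ici_self)
    (fun s hs _ hr => ((hf s hs.1).mono (Ici_subset_Ici.2 hs.1)).liminf_right_slope_le hr)
    le_rfl (fun s hs => by simpa using bound s hs.1) t ⟨ht, le_rfl⟩
  rwa [gronwallBound_ε0] at h

namespace MonomerSetting

variable {d : ℝ → ℝ} {M : ℝ} {V V' : ℝ → ℝ} {u : ℝ → ℝ → ℝ}

theorem integrableOn_u (h : MonomerSetting d M V V' u) {t : ℝ} (ht : t ∈ Ici 0) :
    IntegrableOn (u t) (Ioi 0) :=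
  integrableOn_Ioi_of_one_add_mul (h.u_int t ht)

theorem integrableOn_mul_u (h : MonomerSetting d M V V' u) {t : ℝ} (ht : t ∈ Ici 0) :
    IntegrableOn (fun x => x * u t x) (Ioi 0) :=
  ((h.u_int t ht).sub (h.integrableOn_u ht)).congr_fun
    (fun x _ => by simp only [Pi.sub_apply]; ring) measurableSet_Ioi

theorem integral_mul_u (h : MonomerSetting d M V V' u) {t : ℝ} (ht : t ∈ Ici 0) :
    ∫ x in Ioi (0:ℝ), x * u t x = M - V t := by
  linarith [h.mass t ht]

theorem le_total_mass (h : MonomerSetting d M V V' u) {t : ℝ} (ht : t ∈ Ici 0) : V t ≤ M := by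
  have hnonneg : 0 ≤ ∫ x in Ioi (0:ℝ), x * u t x :=
    setIntegral_nonneg measurableSet_Ioi fun x (hx : 0 < x) =>
      mul_nonneg hx.le (h.u_nonneg t ht x hx.le)
  linarith [h.integral_mul_u ht]

theorem deriv_eq_integral (h : MonomerSetting d M V V' u) {t : ℝ} (ht : t ∈ Ici 0) :
    V' t = ∫ x in Ioi (0:ℝ), (d x - V t) * u t x := by
  simp_rw [sub_mul]
  rw [integral_sub (h.du_int t ht) ((h.integrableOn_u ht).const_mul (V t)),
    integral_const_mul, h.V_ode t ht]
  ring

theorem mul_sub_le_deriv (h : MonomerSetting d M V V' u) {α : ℝ}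
    (hd : ∀ x ∈ Ici (0:ℝ), d 0 + α * x ≤ d x) (hMd : M ≤ d 0) {t : ℝ} (ht : t ∈ Ici 0) :
    α * (M - V t) ≤ V' t := by
  have hVM := h.le_total_mass ht
  rw [h.deriv_eq_integral ht, ← h.integral_mul_u ht, ← integral_const_mul]
  refine setIntegral_mono_on ((h.integrableOn_mul_u ht).const_mul α) ?_ measurableSet_Ioi
    fun x (hx : 0 < x) => ?_
  · exact ((h.du_int t ht).sub ((h.integrableOn_u ht).const_mul (V t))).congr_fun
      (fun x _ => by simp only [Pi.sub_apply]; ring) measurableSet_Ioi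
  · have hu := h.u_nonneg t ht x hx.le
    have hdx := hd x hx.le
    rw [← mul_assoc]
    exact mul_le_mul_of_nonneg_right (by linarith) hu

end MonomerSetting

theorem monomer_trivial_dynamics_general
    (d d' : ℝ → ℝ) (α β : ℝ) (hD : DPlus d d' α β)
    (M : ℝ)
    (V V' : ℝ → ℝ) (u : ℝ → ℝ → ℝ)
    (hset : MonomerSetting d M V V' u)
    (hMd : M ≤ d 0) :
    ∀ t ∈ Ici (0:ℝ), |M - V t| ≤ (M - V 0) * Real.exp (-α * t) := by
  intro t ht
  have hd := add_mul_le_of_le_hasDerivWithinAt hD.hasDeriv hD.deriv_lb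
  have hdecay := le_mul_exp_of_hasDerivWithinAt_le_mul (f := fun s => M - V s) (K := -α)
    (fun s hs => (hset.V_hasDeriv s hs).const_sub M)
    (fun s hs => by linarith [hset.mul_sub_le_deriv hd hMd hs]) t ht
  rw [abs_of_nonneg (sub_nonneg.2 (hset.le_total_mass ht))]
  simpa using hdecay

/-- Proposition 1.1, case 2: under (D+), in the monomer-equation setting
with total mass `M`, if `V(0) < d(0)` and `M ≤ d(0)` then
`|M − V(t)| ≤ (M − V(0)) e^{−αt}` for all `t ≥ 0`. -/
theorem monomer_trivial_dynamics
    (d d' : ℝ → ℝ) (α β : ℝ) (hD : DPlus d d' α β)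
    (M : ℝ) (hM : 0 < M)
    (V V' : ℝ → ℝ) (u : ℝ → ℝ → ℝ)
    (hset : MonomerSetting d M V V' u)
    (hV0 : V 0 < d 0) (hMd : M ≤ d 0) :
    ∀ t ∈ Ici (0:ℝ), |M - V t| ≤ (M - V 0) * Real.exp (-α * t) :=
  monomer_trivial_dynamics_general d d' α β hD M V V' u hset hMd
end

section
/- Assume (D+) and let (V,u) be a weak solution of either the Lifshitz–Slyozov system or the Lifshitz–Slyozov system with nucleation, with total mass M. If V₀ > d(0), then d(0) < V(t) ≤ M for all t ≥ 0. -/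
/-!
Testing the weak formulation with `φ(x) = x` (which vanishes at `0`, so nucleation plays no
role) and using mass conservation gives `V' = -∫ (V - d x) u dx`. As `d` is increasing, this is
at least `-ρ (V - d 0)`, so the integrating factor `exp (∫₀ᵗ ρ)` makes `(V - d 0) exp (∫₀ᵗ ρ)`
nondecreasing; `ρ` is continuous because the weak formulation with `φ = 1` differentiates it.
Hence `V - d 0` stays positive. The bound `V ≤ M` is mass conservation with `∫ x u ≥ 0`.
-/

open Set Filter Topology MeasureTheory

/-- A C¹ test function `φ` (with derivative `φ'`) on `[0,∞)` satisfying
`|φ(x)| ≤ C(1+x²)` and `|φ'(x)| ≤ C(1+x)` for some constant `C`. -/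
def IsTest (φ φ' : ℝ → ℝ) : Prop :=
  (∀ x ∈ Set.Ici (0:ℝ), HasDerivWithinAt φ (φ' x) (Set.Ici 0) x) ∧
  ContinuousOn φ' (Set.Ici 0) ∧
  ∃ C : ℝ, ∀ x ∈ Set.Ici (0:ℝ), |φ x| ≤ C * (1 + x ^ 2) ∧ |φ' x| ≤ C * (1 + x)

/-- Weak solution of the Lifshitz–Slyozov system with nucleation parameter `ε`
(`ε = 0`: no nucleation; `ε = 1`: nucleation with nucleus size `i0`) and total mass `M`:
`V` is C¹ on `[0,∞)`, `u(t,·) ≥ 0` with `(1+x²)u(t,x)` integrable, mass conservation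
`V(t) + ∫₀^∞ x u(t,x) dx = M` holds, and for every test function `φ`,
`d/dt ∫₀^∞ φ(x)u(t,x)dx = ∫₀^∞ φ'(x)(V(t)−d(x))u(t,x)dx + ε φ(0) V(t)^{i0}`. -/
structure WeakSolLSN (d : ℝ → ℝ) (M ε : ℝ) (i0 : ℕ) (V : ℝ → ℝ) (u : ℝ → ℝ → ℝ) : Prop where
  u_nonneg : ∀ t ∈ Set.Ici (0:ℝ), ∀ x ∈ Set.Ici (0:ℝ), 0 ≤ u t x
  V_contDiff : ContDiffOn ℝ 1 V (Set.Ici 0)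
  u_int : ∀ t ∈ Set.Ici (0:ℝ), IntegrableOn (fun x => (1 + x ^ 2) * u t x) (Set.Ioi 0)
  mass : ∀ t ∈ Set.Ici (0:ℝ), V t + ∫ x in Set.Ioi (0:ℝ), x * u t x = M
  weak : ∀ φ φ' : ℝ → ℝ, IsTest φ φ' → ∀ t ∈ Set.Ici (0:ℝ),
    HasDerivWithinAt (fun s => ∫ x in Set.Ioi (0:ℝ), φ x * u s x)
      ((∫ x in Set.Ioi (0:ℝ), φ' x * (V t - d x) * u t x) + ε * φ 0 * V t ^ i0)
      (Set.Ici 0) t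

lemma integrableOn_mul_of_abs_le {f g : ℝ → ℝ} {s : Set ℝ} (hs : MeasurableSet s)
    (hg : IntegrableOn (fun x => (1 + x ^ 2) * g x) s) (hf : ContinuousOn f s) {C : ℝ}
    (hfC : ∀ x ∈ s, |f x| ≤ C * (1 + x ^ 2)) :
    IntegrableOn (fun x => f x * g x) s := by
  have hw : ∀ x : ℝ, 1 + x ^ 2 ≠ 0 := fun x => by positivity
  have hquot : ContinuousOn (fun x => f x / (1 + x ^ 2)) s :=
    hf.div (by fun_prop) fun x _ => hw x
  refine (hg.bdd_mul (hquot.aestronglyMeasurable hs) (c := C) ?_).congr ?_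
  · refine (ae_restrict_iff' hs).2 (Eventually.of_forall fun x hx => ?_)
    rw [Real.norm_eq_abs, abs_div, abs_of_pos (by positivity : (0:ℝ) < 1 + x ^ 2)]
    exact (div_le_iff₀ (by positivity)).2 (hfC x hx)
  · exact Eventually.of_forall fun x => by field_simp [hw x]

lemma le_mul_exp_integral_of_hasDerivWithinAt {f f' r : ℝ → ℝ} {a : ℝ}
    (hr : ContinuousOn r (Ici a))
    (hf : ∀ t ∈ Ici a, HasDerivWithinAt f (f' t) (Ici a) t)
    (hbound : ∀ t ∈ Ici a, -(f t * r t) ≤ f' t) :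
    ∀ t ∈ Ici a, f a ≤ f t * Real.exp (∫ s in a..t, r s) := by
  -- `r` is only continuous on `[a, ∞)`; this extension is continuous on `ℝ`, so FTC applies.
  set ρ : ℝ → ℝ := fun s => r (max a s)
  have hρ : Continuous ρ :=
    hr.comp_continuous (continuous_const.max continuous_id) fun s => le_max_left a s
  have hρr : ∀ s ∈ Ici a, ρ s = r s := fun s hs => by simp [ρ, max_eq_right (mem_Ici.1 hs)]
  set R : ℝ → ℝ := fun t => ∫ s in a..t, ρ s
  have hR : ∀ t, HasDerivAt R (ρ t) t := fun t => (hρ.integral_hasStrictDerivAt a t).hasDerivAt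
  have hg : MonotoneOn (fun t => f t * Real.exp (R t)) (Ici a) := by
    refine monotoneOn_of_hasDerivWithinAt_nonneg
      (f' := fun t => (f' t + f t * r t) * Real.exp (R t)) (convex_Ici a)
      (fun t ht => (hf t ht).continuousWithinAt.mul (hR t).continuousAt.rexp.continuousWithinAt)
      (fun t ht => ?_) fun t ht => ?_
    · refine ((hf t (interior_subset ht)).mono interior_subset).mul (hR t).exp.hasDerivWithinAt
        |>.congr_deriv ?_
      rw [hρr t (interior_subset ht)]
      ring
    · exact mul_nonneg (by linarith [hbound t (interior_subset ht)]) (Real.exp_pos _).le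
  intro t ht
  have hR_eq : R t = ∫ s in a..t, r s :=
    intervalIntegral.integral_congr fun s hs => hρr s (uIcc_of_le (mem_Ici.1 ht) ▸ hs).1
  simpa [R, hR_eq] using hg self_mem_Ici ht ht

namespace DPlus

variable {d d' : ℝ → ℝ} {α β : ℝ}

lemma continuousOn (hD : DPlus d d' α β) : ContinuousOn d (Ici 0) :=
  fun x hx => (hD.hasDeriv x hx).continuousWithinAt

lemma monotoneOn (hD : DPlus d d' α β) : MonotoneOn d (Ici 0) := by
  refine monotoneOn_of_hasDerivWithinAt_nonneg (convex_Ici 0) hD.continuousOn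
    (fun x hx => (hD.hasDeriv x (interior_subset hx)).mono interior_subset) fun x hx => ?_
  exact hD.alpha_pos.le.trans (hD.deriv_lb x (interior_subset hx))

lemma le_add_mul (hD : DPlus d d' α β) {x : ℝ} (hx : 0 ≤ x) : d x ≤ d 0 + β * x := by
  have hmono : MonotoneOn (fun y => d 0 + β * y - d y) (Ici 0) := by
    refine monotoneOn_of_hasDerivWithinAt_nonneg (f' := fun y => β - d' y) (convex_Ici 0)
      ((continuousOn_const.add (continuousOn_const.mul continuousOn_id)).sub hD.continuousOn)
      (fun y hy => ?_) fun y hy => sub_nonneg.2 (hD.deriv_ub y (interior_subset hy))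
    exact (((hasDerivWithinAt_id y _).const_mul β).const_add (d 0)).sub
      ((hD.hasDeriv y (interior_subset hy)).mono interior_subset) |>.congr_deriv (by simp)
  simpa using hmono self_mem_Ici hx hx

lemma abs_sub_le (hD : DPlus d d' α β) (c : ℝ) {x : ℝ} (hx : 0 ≤ x) :
    |c - d x| ≤ (|c| + d 0 + β) * (1 + x ^ 2) := by
  have hdx := hD.le_add_mul hx
  have hd0 := hD.nonneg 0 self_mem_Ici
  have hβ : 0 ≤ β := (hD.alpha_pos.trans_le (hD.deriv_lb 0 self_mem_Ici)).le.trans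
    (hD.deriv_ub 0 self_mem_Ici)
  have h1 : |c - d x| ≤ |c| + d x :=
    (abs_sub _ _).trans_eq (by rw [abs_of_nonneg (hD.nonneg x hx)])
  nlinarith [abs_nonneg c, sq_nonneg (x - 1)]

end DPlus

lemma isTest_one : IsTest (fun _ => 1) (fun _ => 0) :=
  ⟨fun x _ => hasDerivWithinAt_const x _ 1, continuousOn_const, 1, fun x (hx : 0 ≤ x) => by
    constructor
    · rw [abs_one]; nlinarith
    · rw [abs_zero]; linarith⟩

lemma isTest_id : IsTest (fun x => x) (fun _ => 1) :=
  ⟨fun x _ => hasDerivWithinAt_id x _, continuousOn_const, 1, fun x (hx : 0 ≤ x) => by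
    constructor
    · rw [abs_of_nonneg hx]; nlinarith
    · rw [abs_one]; linarith⟩

namespace WeakSolLSN

variable {d : ℝ → ℝ} {M ε : ℝ} {i0 : ℕ} {V : ℝ → ℝ} {u : ℝ → ℝ → ℝ}

lemma le_mass (hsol : WeakSolLSN d M ε i0 V u) {t : ℝ} (ht : t ∈ Ici 0) : V t ≤ M := by
  have hmoment : 0 ≤ ∫ x in Ioi 0, x * u t x :=
    setIntegral_nonneg measurableSet_Ioi fun x (hx : 0 < x) =>
      mul_nonneg hx.le (hsol.u_nonneg t ht x hx.le)
  linarith [hsol.mass t ht]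

lemma continuousOn_integral (hsol : WeakSolLSN d M ε i0 V u) :
    ContinuousOn (fun t => ∫ x in Ioi 0, u t x) (Ici 0) := fun t ht => by
  simpa using (hsol.weak _ _ isTest_one t ht).continuousWithinAt

lemma hasDerivWithinAt_V (hsol : WeakSolLSN d M ε i0 V u) {t : ℝ} (ht : t ∈ Ici 0) :
    HasDerivWithinAt V (-∫ x in Ioi 0, (V t - d x) * u t x) (Ici 0) t := by
  have hw := hsol.weak _ _ isTest_id t ht
  simp only [one_mul, mul_zero, zero_mul, add_zero] at hw
  exact (hw.const_sub M).congr_of_mem (fun s hs => by linarith [hsol.mass s hs]) ht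

lemma integral_sub_mul_le {d' : ℝ → ℝ} {α β : ℝ} (hD : DPlus d d' α β)
    (hsol : WeakSolLSN d M ε i0 V u) {t : ℝ} (ht : t ∈ Ici 0) :
    ∫ x in Ioi 0, (V t - d x) * u t x ≤ (V t - d 0) * ∫ x in Ioi 0, u t x := by
  rw [← integral_const_mul]
  refine setIntegral_mono_on ?_ ?_ measurableSet_Ioi fun x (hx : 0 < x) => ?_
  · exact integrableOn_mul_of_abs_le measurableSet_Ioi (hsol.u_int t ht)
      (continuousOn_const.sub (hD.continuousOn.mono fun x (hx : 0 < x) => hx.le))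
      fun x (hx : 0 < x) => hD.abs_sub_le (V t) hx.le
  · have hu : IntegrableOn (fun x => 1 * u t x) (Ioi 0) :=
      integrableOn_mul_of_abs_le measurableSet_Ioi (hsol.u_int t ht) continuousOn_const
        (C := 1) fun x _ => by rw [abs_one, one_mul]; nlinarith [sq_nonneg x]
    simp only [one_mul] at hu
    exact hu.const_mul _
  · exact mul_le_mul_of_nonneg_right
      (sub_le_sub_left (hD.monotoneOn self_mem_Ici hx.le hx.le) _) (hsol.u_nonneg t ht x hx.le)

end WeakSolLSN

theorem LS_monomer_bounds_general
    (d d' : ℝ → ℝ) (α β : ℝ) (hD : DPlus d d' α β)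
    (M ε : ℝ) (i0 : ℕ)
    (V : ℝ → ℝ) (u : ℝ → ℝ → ℝ)
    (hsol : WeakSolLSN d M ε i0 V u)
    (hV0 : d 0 < V 0) :
    ∀ t ∈ Ici (0:ℝ), d 0 < V t ∧ V t ≤ M := by
  intro t ht
  have hgronwall := le_mul_exp_integral_of_hasDerivWithinAt (f := fun s => V s - d 0)
    hsol.continuousOn_integral (fun s hs => (hsol.hasDerivWithinAt_V hs).sub_const (d 0))
    (fun s hs => neg_le_neg (hsol.integral_sub_mul_le hD hs)) t ht
  have hpos : 0 < V t - d 0 :=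
    pos_of_mul_pos_left ((sub_pos.2 hV0).trans_le hgronwall) (Real.exp_pos _).le
  exact ⟨sub_pos.1 hpos, hsol.le_mass ht⟩

/-- Lemma 2.1, item 1: under (D+), any weak solution of the
Lifshitz–Slyozov system (`ε = 0`) or of the Lifshitz–Slyozov system with nucleation
(`ε = 1`), with total mass `M` and `V₀ > d(0)`, satisfies `d(0) < V(t) ≤ M` for all `t ≥ 0`. -/
theorem LS_monomer_bounds
    (d d' : ℝ → ℝ) (α β : ℝ) (hD : DPlus d d' α β)
    (M ε : ℝ) (i0 : ℕ) (hε : ε = 0 ∨ ε = 1) (hi0 : 1 ≤ i0)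
    (hM : 0 < M)
    (V : ℝ → ℝ) (u : ℝ → ℝ → ℝ)
    (hsol : WeakSolLSN d M ε i0 V u)
    (hV0 : d 0 < V 0) :
    ∀ t ∈ Ici (0:ℝ), d 0 < V t ∧ V t ≤ M :=
  LS_monomer_bounds_general d d' α β hD M ε i0 V u hsol hV0
end

section
/- Assume (D+). Let M > 0 and let V : [0,∞) → ℝ be continuous with 0 ≤ V(t) ≤ M for all t. Extend d to ℝ by setting d(x) := d(0) for x < 0, and for z ∈ ℝ let X(·,z) solve ∂X/∂t(t,z) = V(t) − d(X(t,z)), X(0,z) = z. Let u₀ : [0,∞) → [0,∞) be integrable and let u : [0,∞) × [0,∞) → [0,∞) be such that for every t ≥ 0 and every nonnegative measurable ψ : [0,∞) → ℝ one has ∫₀^∞ ψ(x) u(t,x) dx = ∫₀^∞ ψ(X(t,z)) 𝟙_{X(t,z) ≥ 0} u₀(z) dz (push-forward of u₀ along the characteristics). If θ > 0 and ∫₀^∞ z^θ u₀(z) dz < ∞, then for every t ≥ 0: ∫₀^∞ x^θ u(t,x) dx ≤ ∫₀^∞ (z + M/α)^θ u₀(z) dz. -/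
open Set Filter Topology MeasureTheory

/-! Since `d' ≥ α`, `d(x) ≥ α x` on `[0, ∞)`, so the drift `V − d(X) ≤ M − α X` is negative on
the barrier `X = z + M/α` when `z > 0`: no characteristic started at `z > 0` ever exceeds
`z + M/α`. The push-forward identity with `ψ(x) = x^θ` and monotonicity of `x ↦ x^θ` then
give the moment bound. -/

theorem add_mul_le_of_le_hasDerivWithinAt_Ici {f f' : ℝ → ℝ} {α : ℝ}
    (hf : ∀ x ∈ Ici (0:ℝ), HasDerivWithinAt f (f' x) (Ici 0) x)
    (hα : ∀ x ∈ Ici (0:ℝ), α ≤ f' x) {y : ℝ} (hy : 0 ≤ y) :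
    f 0 + α * y ≤ f y := by
  have hg : ∀ x ∈ Ici (0:ℝ), HasDerivWithinAt (fun x => f x - α * x) (f' x - α) (Ici 0) x :=
    fun x hx => (hf x hx).sub (((hasDerivWithinAt_id x _).const_mul α).congr_deriv (mul_one α))
  have hmono : MonotoneOn (fun x => f x - α * x) (Ici 0) := by
    refine monotoneOn_of_hasDerivWithinAt_nonneg (f' := fun x => f' x - α) (convex_Ici 0)
      (fun x hx => (hg x hx).continuousWithinAt) (fun x hx => ?_) (fun x hx => ?_)
    · rw [interior_Ici] at hx ⊢
      exact ((hg x (mem_Ici.2 hx.le)).hasDerivAt (Ici_mem_nhds hx)).hasDerivWithinAt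
    · rw [interior_Ici] at hx
      exact sub_nonneg.2 (hα x (mem_Ici.2 hx.le))
  have := hmono self_mem_Ici (mem_Ici.2 hy) hy
  simp only [mul_zero, sub_zero] at this
  linarith

theorem DPlus.mul_le {d d' : ℝ → ℝ} {α β : ℝ} (hD : DPlus d d' α β) {y : ℝ} (hy : 0 ≤ y) :
    α * y ≤ d y := by
  have := add_mul_le_of_le_hasDerivWithinAt_Ici hD.hasDeriv hD.deriv_lb hy
  linarith [hD.nonneg 0 self_mem_Ici]

theorem le_add_div_of_hasDerivWithinAt_le_sub_mul {x x' : ℝ → ℝ} {α M : ℝ}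
    (hα : 0 < α) (hM : 0 ≤ M)
    (hx : ∀ t ∈ Ici (0:ℝ), HasDerivWithinAt x (x' t) (Ici 0) t)
    (hx' : ∀ t ∈ Ici (0:ℝ), 0 ≤ x t → x' t ≤ M - α * x t)
    (h0 : 0 < x 0) {t : ℝ} (ht : 0 ≤ t) :
    x t ≤ x 0 + M / α := by
  have hcont : ContinuousOn x (Icc 0 t) :=
    fun s hs => (hx s hs.1).continuousWithinAt.mono fun _ h => h.1
  refine image_le_of_deriv_right_lt_deriv_boundary hcont
    (fun s hs => (hx s hs.1).mono fun _ h => hs.1.trans h) (by linarith [div_nonneg hM hα.le])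
    (fun _ => hasDerivAt_const _ (x 0 + M / α)) (fun s hs hxs => ?_) ⟨ht, le_rfl⟩
  have hbarrier : α * x s = α * x 0 + M := by rw [hxs]; field_simp
  have hdrift := hx' s hs.1 (by rw [hxs]; positivity)
  nlinarith

theorem setLIntegral_rpow_mul_le_of_pushforward {Φ g u u₀ : ℝ → ℝ} {θ : ℝ} (hθ : 0 ≤ θ)
    (hpush : ∀ ψ : ℝ → ENNReal, Measurable ψ →
      (∫⁻ x in Ioi (0:ℝ), ψ x * ENNReal.ofReal (u x)) =
        ∫⁻ z in Ioi (0:ℝ), (if 0 ≤ Φ z then ψ (Φ z) else 0) * ENNReal.ofReal (u₀ z))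
    (hΦ : ∀ z ∈ Ioi (0:ℝ), Φ z ≤ g z) :
    (∫⁻ x in Ioi (0:ℝ), ENNReal.ofReal (x ^ θ * u x)) ≤
      ∫⁻ z in Ioi (0:ℝ), ENNReal.ofReal (g z ^ θ * u₀ z) := by
  calc (∫⁻ x in Ioi (0:ℝ), ENNReal.ofReal (x ^ θ * u x))
      = ∫⁻ x in Ioi (0:ℝ), ENNReal.ofReal (x ^ θ) * ENNReal.ofReal (u x) :=
        setLIntegral_congr_fun measurableSet_Ioi fun x hx =>
          ENNReal.ofReal_mul (Real.rpow_nonneg (le_of_lt hx) θ)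
    _ = ∫⁻ z in Ioi (0:ℝ),
          (if 0 ≤ Φ z then ENNReal.ofReal (Φ z ^ θ) else 0) * ENNReal.ofReal (u₀ z) :=
        hpush _ (ENNReal.measurable_ofReal.comp (Real.continuous_rpow_const hθ).measurable)
    _ ≤ ∫⁻ z in Ioi (0:ℝ), ENNReal.ofReal (g z ^ θ * u₀ z) := by
        refine setLIntegral_mono_ae' measurableSet_Ioi (Eventually.of_forall fun z hz => ?_)
        split_ifs with hΦz
        · have hg : 0 ≤ g z := hΦz.trans (hΦ z hz)
          rw [ENNReal.ofReal_mul (Real.rpow_nonneg hg θ)]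
          gcongr
          exact hΦ z hz
        · simp

theorem moment_propagation_general
    (d d' : ℝ → ℝ) (α β : ℝ) (hD : DPlus d d' α β)
    (M : ℝ)
    (V : ℝ → ℝ)
    (hV : ∀ t ∈ Ici (0:ℝ), 0 ≤ V t ∧ V t ≤ M)
    (X : ℝ → ℝ → ℝ)
    (hX0 : ∀ z : ℝ, X 0 z = z)
    (hXode : ∀ z : ℝ, ∀ t ∈ Ici (0:ℝ),
      HasDerivWithinAt (fun s => X s z) (V t - d (X t z)) (Ici 0) t)
    (u₀ : ℝ → ℝ)
    (u : ℝ → ℝ → ℝ)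
    (hpush : ∀ t ∈ Ici (0:ℝ), ∀ ψ : ℝ → ENNReal, Measurable ψ →
      (∫⁻ x in Ioi (0:ℝ), ψ x * ENNReal.ofReal (u t x)) =
        ∫⁻ z in Ioi (0:ℝ), (if 0 ≤ X t z then ψ (X t z) else 0) * ENNReal.ofReal (u₀ z))
    (θ : ℝ) (hθ : 0 < θ) :
    ∀ t ∈ Ici (0:ℝ),
      (∫⁻ x in Ioi (0:ℝ), ENNReal.ofReal (x ^ θ * u t x)) ≤
        ∫⁻ z in Ioi (0:ℝ), ENNReal.ofReal ((z + M / α) ^ θ * u₀ z) := by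
  intro t ht
  have hM : 0 ≤ M := (hV 0 self_mem_Ici).1.trans (hV 0 self_mem_Ici).2
  refine setLIntegral_rpow_mul_le_of_pushforward hθ.le (hpush t ht) fun z hz => ?_
  have hdrift : ∀ s ∈ Ici (0:ℝ), 0 ≤ X s z → V s - d (X s z) ≤ M - α * X s z :=
    fun s hs hXs => by linarith [(hV s hs).2, hD.mul_le hXs]
  simpa only [hX0] using le_add_div_of_hasDerivWithinAt_le_sub_mul hD.alpha_pos hM (hXode z)
    hdrift (by rwa [hX0]) ht

/-- Lemma 2.1, item 2: propagation of moments: under (D+) (with `d`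
extended to `ℝ` by `d(x) = d(0)` for `x < 0`), let `0 ≤ V ≤ M` be continuous, let
`X(·,z)` solve `∂X/∂t = V(t) − d(X)`, `X(0,z) = z`, and let `u` be the push-forward of
`u₀` along the characteristics, i.e. for every `t ≥ 0` and nonnegative measurable `ψ`,
`∫₀^∞ ψ(x) u(t,x) dx = ∫₀^∞ ψ(X(t,z)) 𝟙_{X(t,z) ≥ 0} u₀(z) dz`.
If `θ > 0` and `∫₀^∞ z^θ u₀(z) dz < ∞`, then for every `t ≥ 0`,
`∫₀^∞ x^θ u(t,x) dx ≤ ∫₀^∞ (z + M/α)^θ u₀(z) dz`. -/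
theorem moment_propagation
    (d d' : ℝ → ℝ) (α β : ℝ) (hD : DPlus d d' α β)
    (hd_ext : ∀ x : ℝ, x < 0 → d x = d 0)
    (M : ℝ) (hM : 0 < M)
    (V : ℝ → ℝ) (hVc : ContinuousOn V (Ici 0))
    (hV : ∀ t ∈ Ici (0:ℝ), 0 ≤ V t ∧ V t ≤ M)
    (X : ℝ → ℝ → ℝ)
    (hX0 : ∀ z : ℝ, X 0 z = z)
    (hXode : ∀ z : ℝ, ∀ t ∈ Ici (0:ℝ),
      HasDerivWithinAt (fun s => X s z) (V t - d (X t z)) (Ici 0) t)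
    (u₀ : ℝ → ℝ) (hu₀_nonneg : ∀ z : ℝ, 0 ≤ u₀ z)
    (hu₀_int : IntegrableOn u₀ (Ioi 0))
    (u : ℝ → ℝ → ℝ) (hu_nonneg : ∀ t ∈ Ici (0:ℝ), ∀ x ∈ Ici (0:ℝ), 0 ≤ u t x)
    (hpush : ∀ t ∈ Ici (0:ℝ), ∀ ψ : ℝ → ENNReal, Measurable ψ →
      (∫⁻ x in Ioi (0:ℝ), ψ x * ENNReal.ofReal (u t x)) =
        ∫⁻ z in Ioi (0:ℝ), (if 0 ≤ X t z then ψ (X t z) else 0) * ENNReal.ofReal (u₀ z))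
    (θ : ℝ) (hθ : 0 < θ)
    (hmom : (∫⁻ z in Ioi (0:ℝ), ENNReal.ofReal (z ^ θ * u₀ z)) < ⊤) :
    ∀ t ∈ Ici (0:ℝ),
      (∫⁻ x in Ioi (0:ℝ), ENNReal.ofReal (x ^ θ * u t x)) ≤
        ∫⁻ z in Ioi (0:ℝ), ENNReal.ofReal ((z + M / α) ^ θ * u₀ z) :=
  moment_propagation_general d d' α β hD M V hV X hX0 hXode u₀ u hpush θ hθ
end

section
/- Assume (D+) and let (V,u) be a weak solution of the Lifshitz–Slyozov system with total mass M, with V₀ > d(0) and ρ₀ > 0. Let x̄ > 0 be the unique solution of M = ρ₀ x̄ + d(x̄). Then there is a constant C > 0 such that for all t ≥ 0: |V(t) − d(x̄)| ≤ C e^{−αt} and ∫₀^∞ (x − x̄)² u(t,x) dx ≤ C e^{−2αt}; moreover for each z ≥ 0 there is a constant C_z > 0 with |X(t,z) − x̄| ≤ C_z e^{−αt} for all t ≥ 0. -/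
open Set Filter Topology MeasureTheory

lemma LSaux_integrable_weight {u g : ℝ → ℝ}
    (hu_int : IntegrableOn (fun x => (1 + x ^ 2) * u x) (Set.Ioi 0))
    (hu0 : ∀ x ∈ Set.Ioi (0:ℝ), 0 ≤ u x)
    (hg : ContinuousOn g (Set.Ioi 0)) {c : ℝ}
    (hb : ∀ x ∈ Set.Ioi (0:ℝ), |g x| ≤ c * (1 + x ^ 2)) :
    IntegrableOn (fun x => g x * u x) (Set.Ioi 0) := by
  have hmeas : MeasurableSet (Set.Ioi (0:ℝ)) := measurableSet_Ioi
  have hasm_b := hu_int.aestronglyMeasurable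
  have hasm_u : AEStronglyMeasurable u (volume.restrict (Set.Ioi 0)) := by
    have hrepr : u = fun x => (1 + x ^ 2)⁻¹ * ((1 + x ^ 2) * u x) := by
      funext x
      have h : (1:ℝ) + x ^ 2 ≠ 0 := by positivity
      field_simp
    rw [hrepr]
    have hcont : Continuous fun x : ℝ => (1 + x ^ 2)⁻¹ :=
      Continuous.inv₀ (by fun_prop) (fun x => by positivity)
    exact (Continuous.aestronglyMeasurable hcont).mul hasm_b
  have hasm_g : AEStronglyMeasurable g (volume.restrict (Set.Ioi 0)) := hg.aestronglyMeasurable hmeas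
  refine Integrable.mono' (hu_int.const_mul c) (hasm_g.mul hasm_u) ?_
  filter_upwards [ae_restrict_mem hmeas] with x hx
  have hu := hu0 x hx
  have hgb := hb x hx
  have : ‖g x * u x‖ = |g x| * u x := by
    rw [norm_mul, Real.norm_eq_abs, Real.norm_eq_abs, abs_of_nonneg hu]
  rw [this]
  nlinarith [mul_le_mul_of_nonneg_right hgb hu]

lemma LSaux_gronwall {f f' : ℝ → ℝ} {c : ℝ}
    (hf : ∀ t ∈ Set.Ici (0:ℝ), HasDerivWithinAt f (f' t) (Set.Ici 0) t)
    (hb : ∀ t ∈ Set.Ici (0:ℝ), f' t ≤ -c * f t) :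
    ∀ t ∈ Set.Ici (0:ℝ), f t ≤ f 0 * Real.exp (-c * t) := by
  have hexp : ∀ t : ℝ, HasDerivAt (fun s : ℝ => Real.exp (c * s)) (c * Real.exp (c * t)) t := by
    intro t
    have h : HasDerivAt (fun s : ℝ => c * s) c t := by
      simpa using (hasDerivAt_id t).const_mul c
    exact ((Real.hasDerivAt_exp (c * t)).comp t h).congr_deriv (by ring)
  set F : ℝ → ℝ := fun t => f t * Real.exp (c * t) with hF_def
  have hF : ∀ t ∈ Set.Ici (0:ℝ),
      HasDerivWithinAt F (f' t * Real.exp (c * t) + f t * (c * Real.exp (c * t))) (Set.Ici 0) t :=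
    fun t ht => (hf t ht).mul (hexp t).hasDerivWithinAt
  have hanti : AntitoneOn F (Set.Ici 0) := by
    apply antitoneOn_of_hasDerivWithinAt_nonpos (convex_Ici 0)
      (fun s hs => (hF s hs).continuousWithinAt)
      (f' := fun t => f' t * Real.exp (c * t) + f t * (c * Real.exp (c * t)))
    · intro x hx
      rw [interior_Ici] at hx ⊢
      exact (hF x (Set.mem_Ici.mpr (le_of_lt hx))).mono Ioi_subset_Ici_self
    · intro x hx
      rw [interior_Ici] at hx
      have h1 := hb x (Set.mem_Ici.mpr (le_of_lt hx))
      have h2 : (0:ℝ) < Real.exp (c * x) := Real.exp_pos _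
      have : f' x * Real.exp (c * x) + f x * (c * Real.exp (c * x))
          = (f' x + c * f x) * Real.exp (c * x) := by ring
      rw [this]
      apply mul_nonpos_of_nonpos_of_nonneg
      · linarith
      · exact le_of_lt h2
  intro t ht
  have h1 : F t ≤ F 0 := hanti (self_mem_Ici) ht ht
  have hEpos : (0:ℝ) < Real.exp (c * t) := Real.exp_pos _
  have h2 : f t ≤ f 0 / Real.exp (c * t) := by
    rw [le_div_iff₀ hEpos]
    simpa [hF_def] using h1
  have h3 : f 0 / Real.exp (c * t) = f 0 * Real.exp (-c * t) := by
    rw [div_eq_mul_inv, ← Real.exp_neg]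
    ring_nf
  linarith [h3 ▸ h2]

lemma LSaux_mono {d d' : ℝ → ℝ} {α β : ℝ} (hD : DPlus d d' α β) :
    ∀ a b : ℝ, 0 ≤ a → a ≤ b → α * (b - a) ≤ d b - d a ∧ d b - d a ≤ β * (b - a) := by
  have hd_cont : ContinuousOn d (Set.Ici 0) :=
    fun x hx => (hD.hasDeriv x hx).continuousWithinAt
  have hmono1 : MonotoneOn (fun x => d x - α * x) (Set.Ici 0) := by
    apply monotoneOn_of_hasDerivWithinAt_nonneg (convex_Ici 0)
      (hd_cont.sub (continuousOn_const.mul continuousOn_id))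
      (f' := fun x => d' x - α)
    · intro x hx
      rw [interior_Ici] at hx ⊢
      have h1 := (hD.hasDeriv x (Set.mem_Ici.mpr (le_of_lt hx))).mono (Ioi_subset_Ici_self)
      have h2 : HasDerivWithinAt (fun y : ℝ => α * y) α (Set.Ioi 0) x := by
        simpa using ((hasDerivAt_id x).const_mul α).hasDerivWithinAt
      exact h1.sub h2
    · intro x hx
      rw [interior_Ici] at hx
      have := hD.deriv_lb x (Set.mem_Ici.mpr (le_of_lt hx))
      linarith
  have hmono2 : MonotoneOn (fun x => β * x - d x) (Set.Ici 0) := by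
    apply monotoneOn_of_hasDerivWithinAt_nonneg (convex_Ici 0)
      ((continuousOn_const.mul continuousOn_id).sub hd_cont)
      (f' := fun x => β - d' x)
    · intro x hx
      rw [interior_Ici] at hx ⊢
      have h1 := (hD.hasDeriv x (Set.mem_Ici.mpr (le_of_lt hx))).mono (Ioi_subset_Ici_self)
      have h2 : HasDerivWithinAt (fun y : ℝ => β * y) β (Set.Ioi 0) x := by
        simpa using ((hasDerivAt_id x).const_mul β).hasDerivWithinAt
      exact h2.sub h1
    · intro x hx
      rw [interior_Ici] at hx
      have := hD.deriv_ub x (Set.mem_Ici.mpr (le_of_lt hx))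
      linarith
  intro a b ha hab
  have hb : (0:ℝ) ≤ b := le_trans ha hab
  have h1 := hmono1 ha hb hab
  have h2 := hmono2 ha hb hab
  simp only at h1 h2
  constructor <;> linarith

lemma LSaux_lip {d d' : ℝ → ℝ} {α β : ℝ} (hD : DPlus d d' α β) :
    ∀ x y : ℝ, 0 ≤ x → 0 ≤ y → |d y - d x| ≤ β * |y - x| := by
  intro x y hx hy
  rcases le_total x y with h | h
  · have := (LSaux_mono hD x y hx h).2
    have h1 := (LSaux_mono hD x y hx h).1
    have hα := hD.alpha_pos
    rw [abs_of_nonneg (by nlinarith), abs_of_nonneg (by linarith)]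
    linarith
  · have := (LSaux_mono hD y x hy h).2
    have h1 := (LSaux_mono hD y x hy h).1
    have hα := hD.alpha_pos
    rw [abs_of_nonpos (by nlinarith), abs_of_nonpos (by linarith)]
    linarith

lemma LSaux_key {d d' : ℝ → ℝ} {α β : ℝ} (hD : DPlus d d' α β) :
    ∀ x y : ℝ, 0 ≤ x → 0 ≤ y → α * (y - x) ^ 2 ≤ (y - x) * (d y - d x) := by
  intro x y hx hy
  rcases le_total x y with h | h
  · have h1 := (LSaux_mono hD x y hx h).1
    nlinarith
  · have h1 := (LSaux_mono hD y x hy h).1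
    nlinarith

lemma LSaux_ub {d d' : ℝ → ℝ} {α β : ℝ} (hD : DPlus d d' α β) :
    ∀ x : ℝ, 0 ≤ x → d x ≤ d 0 + β * x := by
  intro x hx
  have := (LSaux_mono hD 0 x le_rfl hx).2
  linarith [this]

set_option maxHeartbeats 1000000 in
/-- Theorem 1.2, item 3: exponential rates: under (D+), for a weak solution
of the Lifshitz–Slyozov system (ε = 0) with total mass `M`, `V₀ > d(0)` and `ρ₀ > 0`,
writing `x̄ > 0` for the unique solution of `M = ρ₀ x̄ + d(x̄)`, there is `C > 0` with
`|V(t) − d(x̄)| ≤ C e^{−αt}` and `∫₀^∞ (x−x̄)² u(t,x) dx ≤ C e^{−2αt}` for all `t ≥ 0`;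
moreover each characteristic satisfies `|X(t,z) − x̄| ≤ C_z e^{−αt}`. -/
theorem LS_exponential_rates
    (d d' : ℝ → ℝ) (α β : ℝ) (hD : DPlus d d' α β)
    (M : ℝ) (hM : 0 < M) (i0 : ℕ)
    (V : ℝ → ℝ) (u : ℝ → ℝ → ℝ)
    (hsol : WeakSolLSN d M 0 i0 V u)
    (hV0 : d 0 < V 0)
    (hρ0 : 0 < ∫ x in Ioi (0:ℝ), u 0 x)
    (xb : ℝ) (hxb_pos : 0 < xb)
    (hxb : M = (∫ x in Ioi (0:ℝ), u 0 x) * xb + d xb) :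
    (∃ C : ℝ, 0 < C ∧ ∀ t ∈ Ici (0:ℝ),
      |V t - d xb| ≤ C * Real.exp (-α * t) ∧
      (∫ x in Ioi (0:ℝ), (x - xb) ^ 2 * u t x) ≤ C * Real.exp (-2 * α * t)) ∧
    ∀ z ∈ Ici (0:ℝ), ∀ X : ℝ → ℝ, X 0 = z →
      (∀ t ∈ Ici (0:ℝ), 0 ≤ X t) →
      (∀ t ∈ Ici (0:ℝ), HasDerivWithinAt X (V t - d (X t)) (Ici 0) t) →
      ∃ Cz : ℝ, 0 < Cz ∧ ∀ t ∈ Ici (0:ℝ), |X t - xb| ≤ Cz * Real.exp (-α * t) := by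
  
  have hxbnn : (0:ℝ) ≤ xb := le_of_lt hxb_pos
  have hsq1 : ∀ y:ℝ, 0 ≤ y → y ≤ 1 + y^2 := fun y hy => by nlinarith [sq_nonneg (y-1)]
  have hα := hD.alpha_pos
  have hβ : 0 < β := lt_of_lt_of_le hα (le_trans (hD.deriv_lb 0 Set.self_mem_Ici) (hD.deriv_ub 0 Set.self_mem_Ici))
  have hd00 : 0 ≤ d 0 := hD.nonneg 0 Set.self_mem_Ici
  have hd_cont : ContinuousOn d (Set.Ici 0) := fun x hx => (hD.hasDeriv x hx).continuousWithinAt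
  have hd_contI : ContinuousOn d (Set.Ioi 0) := hd_cont.mono Ioi_subset_Ici_self
  have hmeas : MeasurableSet (Set.Ioi (0:ℝ)) := measurableSet_Ioi
  -- notation
  set ρf : ℝ → ℝ := fun t => ∫ x in Set.Ioi (0:ℝ), u t x with hρf_def
  set m1 : ℝ → ℝ := fun t => ∫ x in Set.Ioi (0:ℝ), (x - xb) * u t x with hm1_def
  set Qf : ℝ → ℝ := fun t => ∫ x in Set.Ioi (0:ℝ), (x - xb) ^ 2 * u t x with hQf_def
  set Kf : ℝ → ℝ := fun t => ∫ x in Set.Ioi (0:ℝ), (V t - d x) * u t x with hKf_def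
  set Ef : ℝ → ℝ := fun t => ∫ x in Set.Ioi (0:ℝ), 2 * (x - xb) * (V t - d x) * u t x with hEf_def
  -- integrability instances
  have hInt : ∀ t ∈ Set.Ici (0:ℝ), ∀ g : ℝ → ℝ, ContinuousOn g (Set.Ioi 0) → ∀ c : ℝ,
      (∀ x ∈ Set.Ioi (0:ℝ), |g x| ≤ c * (1 + x ^ 2)) →
      IntegrableOn (fun x => g x * u t x) (Set.Ioi 0) := fun t ht g hg c hb =>
    LSaux_integrable_weight (hsol.u_int t ht)
      (fun x hx => hsol.u_nonneg t ht x (Set.mem_Ici.mpr (le_of_lt hx))) hg hb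
  have i1 : ∀ t ∈ Set.Ici (0:ℝ), IntegrableOn (fun x => u t x) (Set.Ioi 0) := by
    intro t ht
    have := hInt t ht (fun _ => (1:ℝ)) continuousOn_const 1
      (fun x hx => by rw [abs_one]; nlinarith [sq_nonneg x])
    simpa using this
  have i2 : ∀ t ∈ Set.Ici (0:ℝ), IntegrableOn (fun x => (x - xb) * u t x) (Set.Ioi 0) := by
    intro t ht
    refine hInt t ht _ (by fun_prop) (1 + xb) (fun x hx => ?_)
    have hx0 : (0:ℝ) ≤ x := le_of_lt hx
    rw [abs_le]
    constructor <;> nlinarith [sq_nonneg (x-1), sq_nonneg x, mul_nonneg hxbnn (sq_nonneg x)]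
  have i3 : ∀ t ∈ Set.Ici (0:ℝ), IntegrableOn (fun x => (x - xb) ^ 2 * u t x) (Set.Ioi 0) := by
    intro t ht
    refine hInt t ht _ (by fun_prop) (2 + 2 * xb ^ 2) (fun x hx => ?_)
    have hx0 : (0:ℝ) ≤ x := le_of_lt hx
    rw [abs_le]
    constructor <;> nlinarith [sq_nonneg (x-1), sq_nonneg x, sq_nonneg (x+xb), sq_nonneg (x-xb), mul_nonneg (mul_nonneg hxbnn hxbnn) (sq_nonneg x)]
  have i4 : ∀ t ∈ Set.Ici (0:ℝ), IntegrableOn (fun x => (V t - d x) * u t x) (Set.Ioi 0) := by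
    intro t ht
    refine hInt t ht _ (continuousOn_const.sub hd_contI) (|V t| + d 0 + β) (fun x hx => ?_)
    have hx0 : (0:ℝ) < x := hx
    have h1 := LSaux_ub hD x (le_of_lt hx0)
    have h2 := hD.nonneg x (Set.mem_Ici.mpr (le_of_lt hx0))
    have h3 := abs_nonneg (V t)
    have h4 := le_abs_self (V t)
    have h5 := neg_abs_le (V t)
    rw [abs_le]
    constructor <;> nlinarith [sq_nonneg (x-1), sq_nonneg x, mul_nonneg h3 (sq_nonneg x), mul_nonneg hd00 (sq_nonneg x), mul_pos hβ hx0]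
  have i5 : ∀ t ∈ Set.Ici (0:ℝ),
      IntegrableOn (fun x => (x - xb) * (V t - d x) * u t x) (Set.Ioi 0) := by
    intro t ht
    refine hInt t ht (fun x => (x - xb) * (V t - d x))
      (((continuous_sub_right xb).continuousOn).mul (continuousOn_const.sub hd_contI))
      (2 * (1 + xb) * (|V t| + d 0 + β)) (fun x hx => ?_)
    have hx0 : (0:ℝ) < x := hx
    have h1 : |x - xb| ≤ (1 + xb) * (1 + x) := by
      rw [abs_le]; constructor <;> nlinarith [mul_nonneg hxbnn (le_of_lt hx0)]
    have h2 : |V t - d x| ≤ |V t| + d 0 + β * x := by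
      have h1' := LSaux_ub hD x (le_of_lt hx0)
      have h2' := hD.nonneg x (Set.mem_Ici.mpr (le_of_lt hx0))
      have h4 := le_abs_self (V t)
      have h5 := neg_abs_le (V t)
      rw [abs_le]; constructor <;> nlinarith [mul_pos hβ hx0]
    rw [abs_mul]
    have h3 := mul_le_mul h1 h2 (abs_nonneg _) (by positivity)
    refine le_trans h3 ?_
    have hA : |V t| + d 0 + β * x ≤ (|V t| + d 0 + β) * (1 + x) := by
      nlinarith [mul_nonneg (add_nonneg (abs_nonneg (V t)) hd00) (le_of_lt hx0)]
    have hxx : (0:ℝ) ≤ (1 + xb) * (1 + x) := by positivity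
    refine le_trans (mul_le_mul_of_nonneg_left hA hxx) ?_
    have hc : (0:ℝ) ≤ (1 + xb) * (|V t| + d 0 + β) := by positivity
    nlinarith [mul_nonneg hc (sq_nonneg (x - 1))]
  have i6 : ∀ t ∈ Set.Ici (0:ℝ),
      IntegrableOn (fun x => (x - xb) * (d x - d xb) * u t x) (Set.Ioi 0) := by
    intro t ht
    refine hInt t ht (fun x => (x - xb) * (d x - d xb))
      (((continuous_sub_right xb).continuousOn).mul (hd_contI.sub continuousOn_const))
      (2 * β * (1 + xb ^ 2)) (fun x hx => ?_)
    have hx0 : (0:ℝ) < x := hx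
    have h2 : |d x - d xb| ≤ β * |x - xb| := LSaux_lip hD xb x hxbnn (le_of_lt hx0)
    rw [abs_mul]
    have h3 := mul_le_mul_of_nonneg_left h2 (abs_nonneg (x - xb))
    refine le_trans h3 ?_
    have h4 : |x - xb| * (β * |x - xb|) = β * (x - xb) ^ 2 := by
      rw [← sq_abs (x - xb)]; ring
    rw [h4]
    nlinarith [sq_nonneg x, sq_nonneg (x - xb), sq_nonneg (x + xb), sq_nonneg (x*xb),
      mul_nonneg (mul_nonneg hβ.le hxbnn) hxbnn, mul_nonneg hβ.le (sq_nonneg (x*xb)), mul_nonneg hβ.le (sq_nonneg x)]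

  -- test functions
  have test1 : IsTest (fun _ => (1:ℝ)) (fun _ => (0:ℝ)) := by
    refine ⟨fun x _ => hasDerivWithinAt_const x _ 1, continuousOn_const, 1, fun x hx => ?_⟩
    have hx0 : (0:ℝ) ≤ x := hx
    constructor
    · rw [abs_one]; nlinarith [sq_nonneg x]
    · rw [abs_zero]; nlinarith
  have test2 : IsTest (fun x => x - xb) (fun _ => (1:ℝ)) := by
    refine ⟨fun x _ => (hasDerivWithinAt_id x _).sub_const xb, continuousOn_const,
      1 + xb, fun x hx => ?_⟩
    have hx0 : (0:ℝ) ≤ x := hx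
    constructor
    · show |x - xb| ≤ (1 + xb) * (1 + x ^ 2)
      rw [abs_le]
      constructor <;> nlinarith [sq_nonneg (x-1), sq_nonneg x, mul_nonneg hxbnn (sq_nonneg x)]
    · rw [abs_one]; nlinarith [mul_nonneg hxbnn hx0]
  have test3 : IsTest (fun x => (x - xb) ^ 2) (fun x => 2 * (x - xb)) := by
    refine ⟨fun x _ => ?_, by fun_prop, 2 + 2 * xb + 2 * xb ^ 2, fun x hx => ?_⟩
    · have h := ((hasDerivWithinAt_id x (Set.Ici 0)).sub_const xb).pow 2
      simp at h
      exact h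
    · have hx0 : (0:ℝ) ≤ x := hx
      constructor
      · show |(x - xb) ^ 2| ≤ (2 + 2 * xb + 2 * xb ^ 2) * (1 + x ^ 2)
        rw [abs_le]
        constructor <;> nlinarith [sq_nonneg (x-1), sq_nonneg x, sq_nonneg (x+xb),
          sq_nonneg (x-xb), mul_nonneg hxbnn (sq_nonneg x),
          mul_nonneg (mul_nonneg hxbnn hxbnn) (sq_nonneg x), mul_nonneg hxbnn hx0]
      · show |2 * (x - xb)| ≤ (2 + 2 * xb + 2 * xb ^ 2) * (1 + x)
        rw [abs_le]
        constructor <;> nlinarith [sq_nonneg (x-1), sq_nonneg x, mul_nonneg hxbnn hx0,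
          mul_nonneg (mul_nonneg hxbnn hxbnn) hx0]
  -- named observables
  set ρf : ℝ → ℝ := fun t => ∫ x in Set.Ioi (0:ℝ), u t x with hρf_def
  set m1 : ℝ → ℝ := fun t => ∫ x in Set.Ioi (0:ℝ), (x - xb) * u t x with hm1_def
  set Qf : ℝ → ℝ := fun t => ∫ x in Set.Ioi (0:ℝ), (x - xb) ^ 2 * u t x with hQf_def
  set Kf : ℝ → ℝ := fun t => ∫ x in Set.Ioi (0:ℝ), (V t - d x) * u t x with hKf_def
  set Ef : ℝ → ℝ := fun t => ∫ x in Set.Ioi (0:ℝ), 2 * (x - xb) * (V t - d x) * u t x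
    with hEf_def
  have hρf_app : ∀ s, ρf s = ∫ x in Set.Ioi (0:ℝ), u s x := fun s => by rw [hρf_def]
  have hm1_app : ∀ s, m1 s = ∫ x in Set.Ioi (0:ℝ), (x - xb) * u s x := fun s => by
    rw [hm1_def]
  have hQf_app : ∀ s, Qf s = ∫ x in Set.Ioi (0:ℝ), (x - xb) ^ 2 * u s x := fun s => by
    rw [hQf_def]
  have hKf_app : ∀ s, Kf s = ∫ x in Set.Ioi (0:ℝ), (V s - d x) * u s x := fun s => by
    rw [hKf_def]
  have hEf_app : ∀ s, Ef s = ∫ x in Set.Ioi (0:ℝ), 2 * (x - xb) * (V s - d x) * u s x :=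
    fun s => by rw [hEf_def]
  have hρpos : 0 < ρf 0 := by rw [hρf_app]; exact hρ0
  -- derivatives from the weak formulation
  have hρ' : ∀ t ∈ Set.Ici (0:ℝ), HasDerivWithinAt ρf 0 (Set.Ici 0) t := by
    intro t ht
    have hw := hsol.weak _ _ test1 t ht
    simp only [zero_mul, one_mul, mul_zero, add_zero, integral_zero] at hw
    rw [hρf_def]; exact hw
  have hm1' : ∀ t ∈ Set.Ici (0:ℝ), HasDerivWithinAt m1 (Kf t) (Set.Ici 0) t := by
    intro t ht
    have hw := hsol.weak _ _ test2 t ht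
    simp only [zero_mul, one_mul, add_zero] at hw
    rw [hm1_def, hKf_def]; exact hw
  have hQ' : ∀ t ∈ Set.Ici (0:ℝ), HasDerivWithinAt Qf (Ef t) (Set.Ici 0) t := by
    intro t ht
    have hw := hsol.weak _ _ test3 t ht
    simp only [zero_mul, add_zero] at hw
    rw [hQf_def, hEf_def]; exact hw
  -- ρ is constant
  have hρconst : ∀ t ∈ Set.Ici (0:ℝ), ρf t = ρf 0 := by
    intro t ht
    have hcont : ContinuousOn ρf (Set.Icc 0 t) := fun s hs =>
      ((hρ' s hs.1).continuousWithinAt).mono Set.Icc_subset_Ici_self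
    have hderiv : ∀ s ∈ Set.Ico (0:ℝ) t, HasDerivWithinAt ρf 0 (Set.Ici s) s := fun s hs =>
      (hρ' s hs.1).mono (Set.Ici_subset_Ici.mpr hs.1)
    exact constant_of_has_deriv_right_zero hcont hderiv t ⟨ht, le_rfl⟩
  -- mass identity : V t - d xb = - m1 t
  have hVm : ∀ t ∈ Set.Ici (0:ℝ), V t - d xb = - m1 t := by
    intro t ht
    have hm := hsol.mass t ht
    have hsplit : (∫ x in Set.Ioi (0:ℝ), x * u t x)
        = m1 t + xb * ρf t := by
      have e : Set.EqOn (fun x : ℝ => x * u t x)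
          (fun x : ℝ => (x - xb) * u t x + xb * u t x) (Set.Ioi 0) := fun x _ => by ring
      rw [setIntegral_congr_fun hmeas e, integral_add (i2 t ht) ((i1 t ht).const_mul xb),
        integral_const_mul, hm1_app, hρf_app]
    rw [hρconst t ht] at hsplit
    have hxb' : M = ρf 0 * xb + d xb := by rw [hρf_app]; exact hxb
    have hcomm : ρf 0 * xb = xb * ρf 0 := mul_comm _ _
    linarith [hm, hsplit, hxb', hcomm]
  -- nonnegativity of Q
  have hQnn : ∀ t ∈ Set.Ici (0:ℝ), 0 ≤ Qf t := by
    intro t ht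
    rw [hQf_app]
    exact setIntegral_nonneg hmeas
      (fun x hx => mul_nonneg (sq_nonneg _) (hsol.u_nonneg t ht x (Set.mem_Ici.mpr (le_of_lt hx))))
  -- Cauchy–Schwarz : m1 t ^ 2 ≤ ρf 0 * Qf t
  have hCS : ∀ t ∈ Set.Ici (0:ℝ), m1 t ^ 2 ≤ ρf 0 * Qf t := by
    intro t ht
    have hnn : 0 ≤ ∫ x in Set.Ioi (0:ℝ), (ρf 0 * (x - xb) - m1 t) ^ 2 * u t x :=
      setIntegral_nonneg hmeas
        (fun x hx => mul_nonneg (sq_nonneg _) (hsol.u_nonneg t ht x (Set.mem_Ici.mpr (le_of_lt hx))))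
    have hexp : (∫ x in Set.Ioi (0:ℝ), (ρf 0 * (x - xb) - m1 t) ^ 2 * u t x)
        = ρf 0 ^ 2 * Qf t - 2 * ρf 0 * m1 t * m1 t + m1 t ^ 2 * ρf t := by
      have e : Set.EqOn (fun x : ℝ => (ρf 0 * (x - xb) - m1 t) ^ 2 * u t x)
          (fun x : ℝ => (ρf 0 ^ 2 * ((x - xb) ^ 2 * u t x)
            - 2 * ρf 0 * m1 t * ((x - xb) * u t x)) + m1 t ^ 2 * u t x)
          (Set.Ioi 0) := fun x _ => by ring
      have ha : IntegrableOn (fun x : ℝ => ρf 0 ^ 2 * ((x - xb) ^ 2 * u t x)) (Set.Ioi 0) :=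
        (i3 t ht).const_mul _
      have hb : IntegrableOn
          (fun x : ℝ => 2 * ρf 0 * m1 t * ((x - xb) * u t x)) (Set.Ioi 0) :=
        (i2 t ht).const_mul _
      have hab : IntegrableOn (fun x : ℝ => ρf 0 ^ 2 * ((x - xb) ^ 2 * u t x)
          - 2 * ρf 0 * m1 t * ((x - xb) * u t x)) (Set.Ioi 0) := ha.sub hb
      have hc : IntegrableOn (fun x : ℝ => m1 t ^ 2 * u t x) (Set.Ioi 0) :=
        (i1 t ht).const_mul _
      rw [setIntegral_congr_fun hmeas e, integral_add hab hc, integral_sub ha hb,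
        integral_const_mul, integral_const_mul, integral_const_mul,
        hQf_app, hm1_app, hρf_app]
    rw [hρconst t ht] at hexp
    rw [hexp] at hnn
    nlinarith [hρpos, hnn]
  -- lower bound for the dissipative term
  have hG : ∀ t ∈ Set.Ici (0:ℝ),
      α * Qf t ≤ ∫ x in Set.Ioi (0:ℝ), (x - xb) * (d x - d xb) * u t x := by
    intro t ht
    have hmono := setIntegral_mono_on ((i3 t ht).const_mul α) (i6 t ht) hmeas ?_
    · rw [integral_const_mul] at hmono
      rw [hQf_app]
      exact hmono
    · intro x hx
      have hk := LSaux_key hD xb x hxbnn (le_of_lt hx)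
      have hu := hsol.u_nonneg t ht x (Set.mem_Ici.mpr (le_of_lt hx))
      nlinarith [mul_le_mul_of_nonneg_right hk hu]
  have hEsplit : ∀ t ∈ Set.Ici (0:ℝ), Ef t = 2 * (V t - d xb) * m1 t
      - 2 * ∫ x in Set.Ioi (0:ℝ), (x - xb) * (d x - d xb) * u t x := by
    intro t ht
    have e : Set.EqOn (fun x : ℝ => 2 * (x - xb) * (V t - d x) * u t x)
        (fun x : ℝ => (2 * (V t - d xb)) * ((x - xb) * u t x)
          - 2 * ((x - xb) * (d x - d xb) * u t x)) (Set.Ioi 0) := fun x _ => by ring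
    rw [hEf_app, setIntegral_congr_fun hmeas e,
      integral_sub ((i2 t ht).const_mul _) ((i6 t ht).const_mul 2),
      integral_const_mul, integral_const_mul, hm1_app]
  have hQle : ∀ t ∈ Set.Ici (0:ℝ), Ef t ≤ -(2*α) * Qf t := by
    intro t ht
    rw [hEsplit t ht, hVm t ht]
    nlinarith [hG t ht, sq_nonneg (m1 t)]
  have hQbound := LSaux_gronwall hQ' hQle
  -- |m1| bound
  have hm1b : ∀ t ∈ Set.Ici (0:ℝ), |m1 t| ≤ Real.sqrt (ρf 0 * Qf t) := by
    intro t ht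
    rw [← Real.sqrt_sq_eq_abs]
    exact Real.sqrt_le_sqrt (hCS t ht)
  have hexp2 : ∀ t : ℝ, Real.exp (-(2*α)*t) = Real.exp (-α*t) ^ 2 := by
    intro t; rw [sq, ← Real.exp_add]; congr 1; ring
  have hsqrtQ : ∀ t ∈ Set.Ici (0:ℝ),
      Real.sqrt (Qf t) ≤ Real.sqrt (Qf 0) * Real.exp (-α*t) := by
    intro t ht
    have h2 : Qf t ≤ Qf 0 * Real.exp (-α*t) ^ 2 := by
      rw [← hexp2 t]; exact hQbound t ht
    refine le_trans (Real.sqrt_le_sqrt h2) ?_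
    rw [Real.sqrt_mul (hQnn 0 Set.self_mem_Ici), Real.sqrt_sq (Real.exp_nonneg _)]
  constructor
  · -- part 1
    refine ⟨max (Real.sqrt (ρf 0 * Qf 0)) (Qf 0) + 1, ?_, ?_⟩
    · have h0 : 0 ≤ max (Real.sqrt (ρf 0 * Qf 0)) (Qf 0) :=
        le_trans (Real.sqrt_nonneg _) (le_max_left _ _)
      linarith
    · intro t ht
      have hQt := hQbound t ht
      constructor
      · rw [hVm t ht, abs_neg]
        have h1 := hm1b t ht
        have h2 : ρf 0 * Qf t ≤ (ρf 0 * Qf 0) * Real.exp (-α*t) ^ 2 := by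
          rw [← hexp2 t]
          nlinarith [hρpos, hQt]
        have h3 : Real.sqrt (ρf 0 * Qf t) ≤ Real.sqrt (ρf 0 * Qf 0) * Real.exp (-α*t) := by
          refine le_trans (Real.sqrt_le_sqrt h2) ?_
          rw [Real.sqrt_mul (mul_nonneg (le_of_lt hρpos) (hQnn 0 Set.self_mem_Ici)),
            Real.sqrt_sq (Real.exp_nonneg _)]
        have h4 : Real.sqrt (ρf 0 * Qf 0) ≤ max (Real.sqrt (ρf 0 * Qf 0)) (Qf 0) + 1 := by
          have := le_max_left (Real.sqrt (ρf 0 * Qf 0)) (Qf 0); linarith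
        calc |m1 t| ≤ Real.sqrt (ρf 0 * Qf t) := h1
          _ ≤ Real.sqrt (ρf 0 * Qf 0) * Real.exp (-α*t) := h3
          _ ≤ (max (Real.sqrt (ρf 0 * Qf 0)) (Qf 0) + 1) * Real.exp (-α*t) :=
            mul_le_mul_of_nonneg_right h4 (Real.exp_nonneg _)
      · have h5 : Qf 0 ≤ max (Real.sqrt (ρf 0 * Qf 0)) (Qf 0) + 1 := by
          have := le_max_right (Real.sqrt (ρf 0 * Qf 0)) (Qf 0); linarith
        have hexp3 : Real.exp (-(2*α)*t) = Real.exp (-2*α*t) := by congr 1; ring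
        have hgoal : Qf t ≤ (max (Real.sqrt (ρf 0 * Qf 0)) (Qf 0) + 1) * Real.exp (-2*α*t) := by
          rw [← hexp3]
          calc Qf t ≤ Qf 0 * Real.exp (-(2*α)*t) := hQt
            _ ≤ (max (Real.sqrt (ρf 0 * Qf 0)) (Qf 0) + 1) * Real.exp (-(2*α)*t) :=
              mul_le_mul_of_nonneg_right h5 (Real.exp_nonneg _)
        rw [hQf_app] at hgoal
        exact hgoal
  · -- part 2 : characteristics
    intro z hz X hX0 hXpos hX'
    have i9 : ∀ t ∈ Set.Ici (0:ℝ),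
        IntegrableOn (fun x => (X t - x) ^ 2 * u t x) (Set.Ioi 0) := by
      intro t ht
      refine hInt t ht _ (by fun_prop) (2 * (X t) ^ 2 + 2) (fun x hx => ?_)
      have hx0 : (0:ℝ) < x := hx
      rw [abs_of_nonneg (sq_nonneg _)]
      nlinarith [sq_nonneg (X t + x), sq_nonneg (X t * x), sq_nonneg x, sq_nonneg (X t),
        sq_nonneg (x - 1)]
    have i10 : ∀ t ∈ Set.Ici (0:ℝ),
        IntegrableOn (fun x => (X t - x) * (d x - d (X t)) * u t x) (Set.Ioi 0) := by
      intro t ht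
      refine hInt t ht (fun x => (X t - x) * (d x - d (X t)))
        (((continuous_const.sub continuous_id).continuousOn).mul
          (hd_contI.sub continuousOn_const)) (β * (2 * (X t) ^ 2 + 2)) (fun x hx => ?_)
      have hx0 : (0:ℝ) < x := hx
      have h2 : |d x - d (X t)| ≤ β * |x - X t| :=
        LSaux_lip hD (X t) x (hXpos t ht) (le_of_lt hx0)
      rw [abs_mul]
      have h3 := mul_le_mul_of_nonneg_left h2 (abs_nonneg (X t - x))
      refine le_trans h3 ?_
      have h4 : |X t - x| * (β * |x - X t|) = β * (X t - x) ^ 2 := by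
        rw [abs_sub_comm x (X t), ← sq_abs (X t - x)]; ring
      rw [h4]
      nlinarith [sq_nonneg (X t + x), sq_nonneg (X t * x), sq_nonneg x, sq_nonneg (X t),
        mul_nonneg hβ.le (sq_nonneg (X t * x)), mul_nonneg hβ.le (sq_nonneg x),
        mul_nonneg hβ.le (sq_nonneg (X t + x)), mul_nonneg hβ.le (sq_nonneg (X t))]
    set R : ℝ → ℝ := fun s => (X s - xb) ^ 2 * ρf 0 - 2 * ((X s - xb) * m1 s) + Qf s
      with hR_def
    set DR : ℝ → ℝ := fun s => 2 * (X s - xb) * (V s - d (X s)) * ρf 0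
      - 2 * ((V s - d (X s)) * m1 s + (X s - xb) * Kf s) + Ef s with hDR_def
    have hR' : ∀ t ∈ Set.Ici (0:ℝ), HasDerivWithinAt R (DR t) (Set.Ici 0) t := by
      intro t ht
      have h1 := (hX' t ht).sub_const xb
      have h2 := (h1.pow 2).mul_const (ρf 0)
      have h3 := (h1.mul (hm1' t ht)).const_mul (2:ℝ)
      have h4 := hQ' t ht
      have h5 := (h2.sub h3).add h4
      rw [hR_def, hDR_def]
      refine h5.congr_deriv ?_
      push_cast
      ring
    -- identity : ∫ (X t - x)^2 u = R t
    have hRint : ∀ t ∈ Set.Ici (0:ℝ),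
        (∫ x in Set.Ioi (0:ℝ), (X t - x) ^ 2 * u t x) = R t := by
      intro t ht
      have e : Set.EqOn (fun x : ℝ => (X t - x) ^ 2 * u t x)
          (fun x : ℝ => (((X t - xb) ^ 2) * u t x - (2 * (X t - xb)) * ((x - xb) * u t x))
            + (x - xb) ^ 2 * u t x) (Set.Ioi 0) := fun x _ => by ring
      have ha : IntegrableOn (fun x : ℝ => (X t - xb) ^ 2 * u t x) (Set.Ioi 0) :=
        (i1 t ht).const_mul _
      have hb : IntegrableOn (fun x : ℝ => 2 * (X t - xb) * ((x - xb) * u t x)) (Set.Ioi 0) :=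
        (i2 t ht).const_mul _
      have hab : IntegrableOn (fun x : ℝ => (X t - xb) ^ 2 * u t x
          - 2 * (X t - xb) * ((x - xb) * u t x)) (Set.Ioi 0) := ha.sub hb
      rw [setIntegral_congr_fun hmeas e, integral_add hab (i3 t ht), integral_sub ha hb,
        integral_const_mul, integral_const_mul, hR_def]
      rw [← hρf_app t, ← hm1_app t, ← hQf_app t, hρconst t ht]
      ring
    -- the transport identity for DR
    have hDRle : ∀ t ∈ Set.Ici (0:ℝ), DR t ≤ -(2*α) * R t := by
      intro t ht
      -- DR t = 2 * ∫ (X t - x)(d x - d (X t)) u t x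
      have hT : DR t = 2 * ∫ x in Set.Ioi (0:ℝ), (X t - x) * (d x - d (X t)) * u t x := by
        have e : Set.EqOn (fun x : ℝ => (X t - x) * (d x - d (X t)) * u t x)
            (fun x : ℝ => ((((X t - xb) * (V t - d (X t))) * u t x
              - (V t - d (X t)) * ((x - xb) * u t x))
              - (X t - xb) * ((V t - d x) * u t x))
              + (x - xb) * (V t - d x) * u t x) (Set.Ioi 0) := fun x _ => by ring
        have hEf2 : Ef t = 2 * ∫ x in Set.Ioi (0:ℝ), (x - xb) * (V t - d x) * u t x := by
          have e2 : Set.EqOn (fun x : ℝ => 2 * (x - xb) * (V t - d x) * u t x)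
              (fun x : ℝ => 2 * ((x - xb) * (V t - d x) * u t x)) (Set.Ioi 0) :=
            fun x _ => by ring
          rw [hEf_app, setIntegral_congr_fun hmeas e2, integral_const_mul]
        have ha : IntegrableOn
            (fun x : ℝ => (X t - xb) * (V t - d (X t)) * u t x) (Set.Ioi 0) :=
          (i1 t ht).const_mul _
        have hb : IntegrableOn
            (fun x : ℝ => (V t - d (X t)) * ((x - xb) * u t x)) (Set.Ioi 0) :=
          (i2 t ht).const_mul _
        have hc : IntegrableOn
            (fun x : ℝ => (X t - xb) * ((V t - d x) * u t x)) (Set.Ioi 0) :=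
          (i4 t ht).const_mul _
        have hab : IntegrableOn (fun x : ℝ => (X t - xb) * (V t - d (X t)) * u t x
            - (V t - d (X t)) * ((x - xb) * u t x)) (Set.Ioi 0) := ha.sub hb
        have habc : IntegrableOn (fun x : ℝ => (X t - xb) * (V t - d (X t)) * u t x
            - (V t - d (X t)) * ((x - xb) * u t x)
            - (X t - xb) * ((V t - d x) * u t x)) (Set.Ioi 0) := hab.sub hc
        have hDRt : DR t = 2 * (X t - xb) * (V t - d (X t)) * ρf 0
            - 2 * ((V t - d (X t)) * m1 t + (X t - xb) * Kf t) + Ef t := by rw [hDR_def]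
        rw [setIntegral_congr_fun hmeas e, integral_add habc (i5 t ht),
          integral_sub hab hc, integral_sub ha hb,
          integral_const_mul, integral_const_mul, integral_const_mul, hDRt, hEf2]
        rw [← hρf_app t, ← hm1_app t, ← hKf_app t, hρconst t ht]
        ring
      have hps : ∀ x ∈ Set.Ioi (0:ℝ),
          (X t - x) * (d x - d (X t)) * u t x ≤ (-α) * ((X t - x) ^ 2 * u t x) := by
        intro x hx
        have hk := LSaux_key hD x (X t) (le_of_lt hx) (hXpos t ht)
        have hu := hsol.u_nonneg t ht x (Set.mem_Ici.mpr (le_of_lt hx))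
        nlinarith [mul_le_mul_of_nonneg_right hk hu]
      have hmono := setIntegral_mono_on (i10 t ht) ((i9 t ht).const_mul (-α)) hmeas hps
      rw [integral_const_mul, hRint t ht] at hmono
      linarith [hT, hmono]
    have hRbound := LSaux_gronwall hR' hDRle
    have hR0nn : 0 ≤ R 0 := by
      rw [← hRint 0 Set.self_mem_Ici]
      exact setIntegral_nonneg hmeas
        (fun x hx => mul_nonneg (sq_nonneg _) (hsol.u_nonneg 0 Set.self_mem_Ici x (Set.mem_Ici.mpr (le_of_lt hx))))
    have hsqrtR : ∀ t ∈ Set.Ici (0:ℝ),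
        Real.sqrt (R t) ≤ Real.sqrt (R 0) * Real.exp (-α*t) := by
      intro t ht
      have h2 : R t ≤ R 0 * Real.exp (-α*t) ^ 2 := by
        rw [← hexp2 t]; exact hRbound t ht
      refine le_trans (Real.sqrt_le_sqrt h2) ?_
      rw [Real.sqrt_mul hR0nn, Real.sqrt_sq (Real.exp_nonneg _)]
    refine ⟨(Real.sqrt (Qf 0) + Real.sqrt (R 0)) / Real.sqrt (ρf 0) + 1, ?_, ?_⟩
    · have h1 : 0 < Real.sqrt (ρf 0) := Real.sqrt_pos.mpr hρpos
      positivity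
    · intro t ht
      have hkey : (Real.sqrt (ρf 0) * |X t - xb| - Real.sqrt (Qf t)) ^ 2 ≤ R t := by
        have e1 : Real.sqrt (ρf 0) ^ 2 = ρf 0 := Real.sq_sqrt (le_of_lt hρpos)
        have e2 : Real.sqrt (Qf t) ^ 2 = Qf t := Real.sq_sqrt (hQnn t ht)
        have hYw : (X t - xb) * m1 t ≤ |X t - xb| * (Real.sqrt (ρf 0) * Real.sqrt (Qf t)) := by
          have ha : (X t - xb) * m1 t ≤ |X t - xb| * |m1 t| := by
            rw [← abs_mul]; exact le_abs_self _
          have hb2 : |m1 t| ≤ Real.sqrt (ρf 0) * Real.sqrt (Qf t) := by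
            have := hm1b t ht
            rwa [Real.sqrt_mul (le_of_lt hρpos)] at this
          exact le_trans ha (mul_le_mul_of_nonneg_left hb2 (abs_nonneg _))
        have hRt : R t = (X t - xb) ^ 2 * ρf 0 - 2 * ((X t - xb) * m1 t) + Qf t := by
          rw [hR_def]
        rw [hRt]
        nlinarith [hYw, e1, e2, sq_abs (X t - xb)]
      have h1 : Real.sqrt (ρf 0) * |X t - xb| - Real.sqrt (Qf t) ≤ Real.sqrt (R t) := by
        have := Real.sqrt_le_sqrt hkey
        rw [Real.sqrt_sq_eq_abs] at this
        exact le_trans (le_abs_self _) this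
      have h2 : Real.sqrt (ρf 0) * |X t - xb|
          ≤ (Real.sqrt (Qf 0) + Real.sqrt (R 0)) * Real.exp (-α*t) := by
        have := hsqrtQ t ht
        have := hsqrtR t ht
        nlinarith [hsqrtQ t ht, hsqrtR t ht, h1]
      have hsp : 0 < Real.sqrt (ρf 0) := Real.sqrt_pos.mpr hρpos
      have h3 : |X t - xb| ≤ (Real.sqrt (Qf 0) + Real.sqrt (R 0)) / Real.sqrt (ρf 0)
          * Real.exp (-α*t) := by
        rw [div_mul_eq_mul_div, le_div_iff₀ hsp]
        calc |X t - xb| * Real.sqrt (ρf 0) = Real.sqrt (ρf 0) * |X t - xb| := by ring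
          _ ≤ (Real.sqrt (Qf 0) + Real.sqrt (R 0)) * Real.exp (-α*t) := h2
      refine le_trans h3 ?_
      have h4 : (Real.sqrt (Qf 0) + Real.sqrt (R 0)) / Real.sqrt (ρf 0)
          ≤ (Real.sqrt (Qf 0) + Real.sqrt (R 0)) / Real.sqrt (ρf 0) + 1 := by linarith
      exact mul_le_mul_of_nonneg_right h4 (Real.exp_nonneg _)
end
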